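/- Suppose every load bus is connected to some source bus by a path of lines of total resistance at most R_max, and let 0 < V_tr < V0. Let v be a voltage profile with v_k = V0 at all sources, v_k ≥ V_tr for all loads, and v_κ = V_tr for at least one load κ ∈ L. Then G(v) ≥ (V_tr − V0)²/(2·R_max) + p_Σ·log V_tr. -/

import Mathlib

/-!
Along a path from the load `κ` (at voltage `V_tr`) to a source (at `V0`), the voltage drops
over the distinct lines of the path add up to at least `V0 - V_tr`. Cauchy–Schwarz, weighted by
the resistances, then bounds `(V0 - V_tr)²` by the path resistance times
`Σ_α (v_{α₁} - v_{α₂})² / R_α`, which controls the line part of `G`; the load part is at least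
`p_Σ log V_tr` because `log` is monotone.
-/

open Finset

/-- Full voltage profile on buses `S ⊕ L`: every source bus is held at `V0`,
load bus `k` is at `vL k`. -/
def fullV {S L : Type*} (V0 : ℝ) (vL : L → ℝ) : S ⊕ L → ℝ :=
  Sum.elim (fun _ => V0) vL

/-- Resistive co-content
`G(v) = Σ_α (v_{α₁} - v_{α₂})²/(2 R_α) + Σ_k p_k log v_k`. -/
noncomputable def cocontent {S L E : Type*} [Fintype L] [Fintype E]
    (e1 e2 : E → S ⊕ L) (R : E → ℝ) (p : L → ℝ) (V0 : ℝ) (vL : L → ℝ) : ℝ :=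
  (∑ α, (fullV (S := S) V0 vL (e1 α) - fullV (S := S) V0 vL (e2 α)) ^ 2 / (2 * R α))
    + ∑ k, p k * Real.log (vL k)

/-- There is a path of lines (each traversed in either direction) joining the
load bus `k` to some source bus, whose total resistance is at most `Rmax`. -/
def pathToSource {S L E : Type*} [Fintype E]
    (e1 e2 : E → S ⊕ L) (R : E → ℝ) (Rmax : ℝ) (k : L) : Prop :=
  ∃ (n : ℕ) (b : Fin (n + 1) → S ⊕ L) (ed : Fin n → E),
    b 0 = Sum.inr k ∧ (∃ s : S, b (Fin.last n) = Sum.inl s) ∧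
    (∀ i : Fin n,
      (e1 (ed i) = b i.castSucc ∧ e2 (ed i) = b i.succ) ∨
      (e1 (ed i) = b i.succ ∧ e2 (ed i) = b i.castSucc)) ∧
    (∑ i, R (ed i)) ≤ Rmax

/-- `vL` is a critical point of the co-content `G` with respect to the load
voltages: all load voltages are positive and `∂G/∂v_k = 0` for every load `k`. -/
noncomputable def isCritPt {S L E : Type*} [Fintype E] [Fintype L]
    [DecidableEq S] [DecidableEq L]
    (e1 e2 : E → S ⊕ L) (R : E → ℝ) (p : L → ℝ) (V0 : ℝ) (vL : L → ℝ) : Prop :=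
  (∀ k, 0 < vL k) ∧
  ∀ k : L,
    (∑ α, ((if e1 α = Sum.inr k then (1 : ℝ) else 0)
        - (if e2 α = Sum.inr k then 1 else 0))
      * (fullV (S := S) V0 vL (e1 α) - fullV (S := S) V0 vL (e2 α)) / R α)
    + p k / vL k = 0

/-- High-voltage solution of `v (V0 - v) = R p`. -/
noncomputable def Vhigh (V0 R p : ℝ) : ℝ :=
  V0 / 2 * (1 + Real.sqrt (1 - p / (V0 ^ 2 / (4 * R))))

/-- Low-voltage solution of `v (V0 - v) = R p`. -/
noncomputable def Vlow (V0 R p : ℝ) : ℝ :=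
  V0 / 2 * (1 - Real.sqrt (1 - p / (V0 ^ 2 / (4 * R))))

/-- Line-current derivative expressed through the state:
`di_α/dt = (-R_α i_α + v_{α₁} - v_{α₂}) / L_α`. -/
noncomputable def idotF {S L E : Type*} (e1 e2 : E → S ⊕ L) (R Lind : E → ℝ)
    (V0 : ℝ) (i : E → ℝ) (vL : L → ℝ) (α : E) : ℝ :=
  (-R α * i α + fullV (S := S) V0 vL (e1 α) - fullV (S := S) V0 vL (e2 α)) / Lind α

/-- Load-voltage derivative expressed through the state:
`dv_k/dt = (-p_k/v_k - (net current leaving bus k)) / C_k`. -/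
noncomputable def vdotF {S L E : Type*} [Fintype E] [DecidableEq S] [DecidableEq L]
    (e1 e2 : E → S ⊕ L) (C p : L → ℝ) (i : E → ℝ) (vL : L → ℝ) (k : L) : ℝ :=
  (-(p k / vL k)
    - ∑ α, ((if e1 α = Sum.inr k then (1 : ℝ) else 0)
        - (if e2 α = Sum.inr k then 1 else 0)) * i α) / C k

/-- Brayton–Moser potential
`P(x) = G(v) + Σ_α ((τmax - τ_α)/2) L_α (di_α/dt)² + (τmax/2) Σ_k C_k (dv_k/dt)²`,
with the time derivatives expressed through the state via the dynamics. -/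
noncomputable def BMpot {S L E : Type*} [Fintype L] [Fintype E]
    [DecidableEq S] [DecidableEq L]
    (e1 e2 : E → S ⊕ L) (R Lind : E → ℝ) (C p : L → ℝ) (V0 τmax : ℝ)
    (i : E → ℝ) (vL : L → ℝ) : ℝ :=
  cocontent e1 e2 R p V0 vL
    + (∑ α, (τmax - Lind α / R α) / 2 * Lind α * (idotF e1 e2 R Lind V0 i vL α) ^ 2)
    + τmax / 2 * ∑ k, C k * (vdotF e1 e2 C p i vL k) ^ 2

section Walk

variable {X E : Type*} (e1 e2 : E → X)

def Joins (a : E) (x y : X) : Prop :=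
  (e1 a = x ∧ e2 a = y) ∨ (e1 a = y ∧ e2 a = x)

variable {e1 e2}

theorem Joins.abs_sub_eq {a : E} {x y : X} (h : Joins e1 e2 a x y) (v : X → ℝ) :
    |v y - v x| = |v (e1 a) - v (e2 a)| := by
  rcases h with ⟨rfl, rfl⟩ | ⟨rfl, rfl⟩
  exacts [abs_sub_comm _ _, rfl]

theorem Joins.eq_or_eq {a : E} {x y x' y' : X} (h : Joins e1 e2 a x y)
    (h' : Joins e1 e2 a x' y') : y' = x ∨ y' = y := by
  rcases h with ⟨rfl, rfl⟩ | ⟨rfl, rfl⟩ <;> rcases h' with ⟨rfl, rfl⟩ | ⟨rfl, rfl⟩ <;> simp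

theorem image_univ_fin_succ {α : Type*} [DecidableEq α] {n : ℕ} (f : Fin (n + 1) → α) :
    univ.image f = insert (f (Fin.last n)) (univ.image fun i : Fin n => f i.castSucc) := by
  ext a
  simp [Fin.exists_fin_succ', or_comm, eq_comm]

theorem abs_sub_le_sum_image_of_walk [DecidableEq E] (v : X → ℝ) :
    ∀ {n : ℕ} (b : Fin (n + 1) → X) (ed : Fin n → E),
      (∀ i, Joins e1 e2 (ed i) (b i.castSucc) (b i.succ)) →
      ∀ i, |v (b i) - v (b 0)| ≤ ∑ a ∈ univ.image ed, |v (e1 a) - v (e2 a)|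
  | 0, b, _, _, i => by simp [Fin.fin_one_eq_zero i]
  | n + 1, b, ed, hb, i => by
    have ih := abs_sub_le_sum_image_of_walk v (fun j : Fin (n + 1) => b j.castSucc)
      (fun j => ed j.castSucc) (fun j => by simpa only [Fin.succ_castSucc] using hb j.castSucc)
    simp only [Fin.castSucc_zero] at ih
    have hsub : ∑ a ∈ univ.image (fun j : Fin n => ed j.castSucc), |v (e1 a) - v (e2 a)| ≤
        ∑ a ∈ univ.image ed, |v (e1 a) - v (e2 a)| := by
      rw [image_univ_fin_succ ed]
      exact sum_le_sum_of_subset_of_nonneg (subset_insert _ _) fun _ _ _ => abs_nonneg _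
    induction i using Fin.lastCases with
    | cast j => exact (ih j).trans hsub
    | last =>
      rw [← Fin.succ_last]
      by_cases hmem : ed (Fin.last n) ∈ univ.image fun j : Fin n => ed j.castSucc
      · -- the last line was already used, so its far end was already visited
        obtain ⟨j, -, hj⟩ := mem_image.mp hmem
        rcases (hj ▸ hb j.castSucc).eq_or_eq (hb (Fin.last n)) with h | h <;> rw [h]
        · exact (ih j.castSucc).trans hsub
        · rw [Fin.succ_castSucc]
          exact (ih j.succ).trans hsub
      · rw [image_univ_fin_succ ed, sum_insert hmem]
        calc |v (b (Fin.last n).succ) - v (b 0)|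
            ≤ |v (b (Fin.last n).succ) - v (b (Fin.last n).castSucc)|
              + |v (b (Fin.last n).castSucc) - v (b 0)| := abs_sub_le _ _ _
          _ ≤ _ := add_le_add ((hb _).abs_sub_eq v).le (ih (Fin.last n))

theorem sq_sub_le_mul_sum_sq_div_of_walk [Fintype E] {R : E → ℝ} (hR : ∀ a, 0 < R a)
    (v : X → ℝ) {n : ℕ} (b : Fin (n + 1) → X) (ed : Fin n → E)
    (hb : ∀ i, Joins e1 e2 (ed i) (b i.castSucc) (b i.succ))
    {Rmax : ℝ} (hRmax : ∑ i, R (ed i) ≤ Rmax) :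
    (v (b (Fin.last n)) - v (b 0)) ^ 2 ≤ Rmax * ∑ a, (v (e1 a) - v (e2 a)) ^ 2 / R a := by
  classical
  set T := univ.image ed
  have hdiv_nonneg : ∀ a, 0 ≤ (v (e1 a) - v (e2 a)) ^ 2 / R a :=
    fun a => div_nonneg (sq_nonneg _) (hR a).le
  calc (v (b (Fin.last n)) - v (b 0)) ^ 2
      = |v (b (Fin.last n)) - v (b 0)| ^ 2 := (sq_abs _).symm
    _ ≤ (∑ a ∈ T, |v (e1 a) - v (e2 a)|) ^ 2 :=
      pow_le_pow_left₀ (abs_nonneg _) (abs_sub_le_sum_image_of_walk v b ed hb _) 2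
    _ ≤ (∑ a ∈ T, R a) * ∑ a ∈ T, (v (e1 a) - v (e2 a)) ^ 2 / R a :=
      sum_sq_le_sum_mul_sum_of_sq_le_mul T (fun a _ => (hR a).le) (fun a _ => hdiv_nonneg a)
        fun a _ => by rw [sq_abs, mul_div_cancel₀ _ (hR a).ne']
    _ ≤ Rmax * ∑ a, (v (e1 a) - v (e2 a)) ^ 2 / R a := by
      have hT : ∑ a ∈ T, R a ≤ Rmax :=
        (sum_image_le_of_nonneg fun a _ => (hR a).le).trans hRmax
      exact mul_le_mul hT (sum_le_sum_of_subset_of_nonneg (subset_univ T) fun a _ _ =>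
        hdiv_nonneg a) (sum_nonneg fun a _ => hdiv_nonneg a)
        ((sum_nonneg fun a _ => (hR a).le).trans hT)

end Walk

theorem stmt_9_general {S L E : Type*} [Fintype L] [Fintype E]
    (e1 e2 : E → S ⊕ L) (R : E → ℝ) (hR : ∀ α, 0 < R α)
    (V0 Rmax Vtr : ℝ) (hVtr : 0 < Vtr)
    (p : L → ℝ) (hp : ∀ k, 0 ≤ p k)
    (hpath : ∀ k : L, pathToSource e1 e2 R Rmax k)
    (vL : L → ℝ) (hge : ∀ k, Vtr ≤ vL k) (κ : L) (hκ : vL κ = Vtr) :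
    (Vtr - V0) ^ 2 / (2 * Rmax) + (∑ k, p k) * Real.log Vtr ≤
      cocontent e1 e2 R p V0 vL := by
  obtain ⟨n, b, ed, hb0, ⟨s, hbs⟩, hb, hRmax⟩ := hpath κ
  set v : S ⊕ L → ℝ := fullV V0 vL
  have hwalk := sq_sub_le_mul_sum_sq_div_of_walk hR v b ed hb hRmax
  have hv_source : v (b (Fin.last n)) = V0 := by simp [v, fullV, hbs]
  have hv_load : v (b 0) = Vtr := by simp [v, fullV, hb0, hκ]
  rw [hv_source, hv_load] at hwalk
  have hRmax_nonneg : 0 ≤ Rmax := (sum_nonneg fun i _ => (hR (ed i)).le).trans hRmax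
  have hlines : (Vtr - V0) ^ 2 / (2 * Rmax) ≤ ∑ α, (v (e1 α) - v (e2 α)) ^ 2 / (2 * R α) :=
    calc (Vtr - V0) ^ 2 / (2 * Rmax) = (V0 - Vtr) ^ 2 / Rmax / 2 := by ring
      _ ≤ (∑ α, (v (e1 α) - v (e2 α)) ^ 2 / R α) / 2 := by
        gcongr
        exact div_le_of_le_mul₀ hRmax_nonneg
          (sum_nonneg fun α _ => div_nonneg (sq_nonneg _) (hR α).le) (by linarith)
      _ = ∑ α, (v (e1 α) - v (e2 α)) ^ 2 / (2 * R α) := by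
        rw [sum_div]
        exact sum_congr rfl fun α _ => by ring
  have hloads : (∑ k, p k) * Real.log Vtr ≤ ∑ k, p k * Real.log (vL k) := by
    rw [sum_mul]
    gcongr with k
    · exact hp k
    · exact hge k
  exact add_le_add hlines hloads

/-- If every load bus is connected to some source by a path of total
resistance at most `Rmax`, `0 < V_tr < V0`, all load voltages are at least
`V_tr`, and some load bus `κ` has voltage exactly `V_tr`, then
`G(v) ≥ (V_tr - V0)²/(2 Rmax) + p_Σ log V_tr`. -/
theorem stmt_9 {S L E : Type*} [Fintype S] [Fintype L] [Fintype E]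
    (e1 e2 : E → S ⊕ L) (R : E → ℝ) (hR : ∀ α, 0 < R α)
    (V0 Rmax Vtr : ℝ) (hV0 : 0 < V0) (hVtr : 0 < Vtr) (hVtrV0 : Vtr < V0)
    (p : L → ℝ) (hp : ∀ k, 0 ≤ p k)
    (hpath : ∀ k : L, pathToSource e1 e2 R Rmax k)
    (vL : L → ℝ) (hge : ∀ k, Vtr ≤ vL k) (κ : L) (hκ : vL κ = Vtr) :
    (Vtr - V0) ^ 2 / (2 * Rmax) + (∑ k, p k) * Real.log Vtr ≤
      cocontent e1 e2 R p V0 vL :=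
  stmt_9_general e1 e2 R hR V0 Rmax Vtr hVtr p hp hpath vL hge κ hκ
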